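/- Let d ≥ 2, let ρ be a Hermitian d×d complex matrix, and let M̂ be an imaginary observable (Hermitian with M̂ᵀ = −M̂) satisfying tr(M̂²) = d. Then the second moment of partial real randomized measurements satisfies ∫_{O(d)} (tr(O·ρ·Oᵀ·M̂))² dμ_O(O) = (2/(d−1)) · tr( ((ρ − ρᵀ)/2)² ). -/

import Mathlib

/-!
Write `B(O) = Oᵀ M̂ O`. By cyclicity of the trace the integrand is `tr(ρ B(O))²`, a quadratic form
in the entries of `B(O)`, so everything reduces to the second moments `∫ B_ab B_ce`. Haar measure
on the compact group `O(d)` is right invariant. Right multiplication by the sign flip at `x` turns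
`B_ij` into `±B_ij`, so it kills every moment in which `x` occurs an odd number of times among
`a, b, c, e`. Right multiplication by permutation matrices permutes the indices, so `∫ B_ab²` is the
same for all `a ≠ b`. Since `B` is antisymmetric and `∑ B_ab² = tr(M̂ M̂ᵀ) = -d`, this common value
is `-1/(d-1)`, whence `∫ B_ab B_ce = -(δ_ac δ_be - δ_ae δ_bc)/(d-1)`. Summed against the entries
of `ρ`, this sees only the antisymmetric part of `ρ`.
-/

open MeasureTheory Matrix

/-- Entrywise coercion of a real orthogonal matrix to a complex matrix. -/
def OC {d : ℕ} (O : Matrix.orthogonalGroup (Fin d) ℝ) : Matrix (Fin d) (Fin d) ℂ :=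
  (O : Matrix (Fin d) (Fin d) ℝ).map Complex.ofReal

section CompactGroup

variable {G : Type*} [Group G] [TopologicalSpace G] [IsTopologicalGroup G] [CompactSpace G]
  [MeasurableSpace G] [BorelSpace G]

instance MeasureTheory.Measure.IsHaarMeasure.isMulRightInvariant_of_compactSpace
    (μ : Measure G) [μ.IsHaarMeasure] : μ.IsMulRightInvariant where
  map_mul_right_eq_self g := by
    have hconj : MeasurePreserving (MulAut.conj g⁻¹) μ μ :=
      MonoidHom.measurePreserving (f := (MulAut.conj g⁻¹).toMonoidHom)
        ((continuous_const_mul _).mul continuous_const) (MulAut.conj g⁻¹).surjective rfl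
    have : (· * g) = (g * ·) ∘ MulAut.conj g⁻¹ := by ext; simp [mul_assoc]
    rw [this, ← Measure.map_map (by fun_prop) hconj.measurable, hconj.map_eq,
      map_mul_left_eq_self]

end CompactGroup

lemma Continuous.integrable_of_compactSpace {X E : Type*} [TopologicalSpace X] [CompactSpace X]
    [T2Space X] [MeasurableSpace X] [OpensMeasurableSpace X] [NormedAddCommGroup E]
    {μ : Measure X} [IsFiniteMeasureOnCompacts μ] {f : X → E} (hf : Continuous f) :
    Integrable f μ :=
  integrableOn_univ.mp (hf.continuousOn.integrableOn_compact isCompact_univ)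

instance Matrix.compactSpace_unitaryGroup {n 𝕜 : Type*} [Fintype n] [DecidableEq n] [RCLike 𝕜] :
    CompactSpace (unitaryGroup n 𝕜) := by
  refine isCompact_iff_compactSpace.mp <| (isCompact_univ_pi fun _ => isCompact_univ_pi fun _ =>
    isCompact_closedBall (0 : 𝕜) 1).of_isClosed_subset (isClosed_unitary (R := Matrix n n 𝕜))
    fun U hU => ?_
  simpa using fun i j => entry_norm_bound_of_unitary hU i j

theorem Equiv.Perm.exists_apply_eq_and_apply_eq {α : Type*} [DecidableEq α] {a b c e : α}
    (hab : a ≠ b) (hce : c ≠ e) : ∃ σ : Equiv.Perm α, σ a = c ∧ σ b = e := by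
  refine ⟨(Equiv.swap a c).trans (Equiv.swap (Equiv.swap a c b) e), ?_, by simp⟩
  have hc : Equiv.swap a c b ≠ c := by
    rw [Ne, Equiv.swap_apply_eq_iff, Equiv.swap_apply_right]
    exact hab.symm
  simp [Equiv.swap_apply_of_ne_of_ne hc.symm hce]

lemma Matrix.trace_half_sub_transpose_sq {n R : Type*} [Fintype n] [Field R] [NeZero (2 : R)]
    (X : Matrix n n R) :
    ((2⁻¹ : R) • (X - Xᵀ) * ((2⁻¹ : R) • (X - Xᵀ))).trace =
      ((X * X).trace - (X * Xᵀ).trace) / 2 := by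
  have h₁ : (Xᵀ * X).trace = (X * Xᵀ).trace := trace_mul_comm _ _
  have h₂ : (Xᵀ * Xᵀ).trace = (X * X).trace := by rw [← transpose_mul, trace_transpose]
  simp only [Matrix.smul_mul, Matrix.mul_smul, Matrix.sub_mul, Matrix.mul_sub, trace_smul,
    trace_sub, h₁, h₂, smul_eq_mul]
  field_simp
  ring

namespace Matrix.orthogonalGroup

variable {n : Type*} [Fintype n] [DecidableEq n]

def signFlip (x : n) : orthogonalGroup n ℝ :=
  ⟨diagonal (Pi.mulSingle x (-1)), by
    rw [mem_unitaryGroup_iff, star_eq_conjTranspose, diagonal_conjTranspose,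
      diagonal_mul_diagonal, ← diagonal_one]
    congr 1
    ext i
    by_cases h : i = x <;> simp [h]⟩

def ofPerm (σ : Equiv.Perm n) : orthogonalGroup n ℝ :=
  ⟨σ.permMatrix ℝ, by
    rw [mem_unitaryGroup_iff, star_eq_conjTranspose, conjTranspose_permMatrix, ← permMatrix_mul,
      inv_mul_cancel, permMatrix_one]⟩

end Matrix.orthogonalGroup

open Matrix.orthogonalGroup

section RotatedObservable

variable {d : ℕ}

lemma OC_mul (O Q : orthogonalGroup (Fin d) ℝ) : OC (O * Q) = OC O * OC Q :=
  Matrix.map_mul (f := Complex.ofRealHom)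

lemma OC_mul_transpose_self (O : orthogonalGroup (Fin d) ℝ) : OC O * (OC O)ᵀ = 1 := by
  have h : (O : Matrix (Fin d) (Fin d) ℝ) * (O : Matrix (Fin d) (Fin d) ℝ)ᵀ = 1 := by
    simpa [star_eq_conjTranspose] using mem_unitaryGroup_iff.mp O.2
  change (O : Matrix (Fin d) (Fin d) ℝ).map Complex.ofRealHom *
    ((O : Matrix (Fin d) (Fin d) ℝ).map Complex.ofRealHom)ᵀ = 1
  rw [← transpose_map, ← Matrix.map_mul, h, Matrix.map_one _ (map_zero _) (map_one _)]

lemma continuous_OC : Continuous (OC (d := d)) :=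
  continuous_subtype_val.matrix_map Complex.continuous_ofReal

lemma OC_signFlip (x : Fin d) : OC (signFlip x) = diagonal (Pi.mulSingle x (-1)) := by
  rw [OC, signFlip, diagonal_map Complex.ofReal_zero]
  congr 1
  ext i
  by_cases h : i = x <;> simp [h]

lemma OC_ofPerm (σ : Equiv.Perm (Fin d)) : OC (ofPerm σ) = σ.permMatrix ℂ := by
  ext i j
  simp [OC, ofPerm, PEquiv.toMatrix_apply, apply_ite Complex.ofReal]

def orthConj (M : Matrix (Fin d) (Fin d) ℂ) (O : orthogonalGroup (Fin d) ℝ) :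
    Matrix (Fin d) (Fin d) ℂ :=
  (OC O)ᵀ * M * OC O

lemma trace_OC_mul_mul_transpose_mul (O : orthogonalGroup (Fin d) ℝ)
    (ρ M : Matrix (Fin d) (Fin d) ℂ) :
    (OC O * ρ * (OC O)ᵀ * M).trace = (ρ * orthConj M O).trace := by
  rw [orthConj, trace_mul_comm ρ, Matrix.mul_assoc, trace_mul_comm]
  simp only [Matrix.mul_assoc]

section OrthConj

variable (M : Matrix (Fin d) (Fin d) ℂ)

lemma orthConj_mul (O Q : orthogonalGroup (Fin d) ℝ) :
    orthConj M (O * Q) = (OC Q)ᵀ * orthConj M O * OC Q := by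
  simp only [orthConj, OC_mul, transpose_mul, Matrix.mul_assoc]

lemma orthConj_mul_signFlip_apply (O : orthogonalGroup (Fin d) ℝ) (x i j : Fin d) :
    orthConj M (O * signFlip x) i j =
      (Pi.mulSingle x (-1) : Fin d → ℂ) i * (Pi.mulSingle x (-1) : Fin d → ℂ) j *
        orthConj M O i j := by
  rw [orthConj_mul, OC_signFlip, diagonal_transpose, mul_diagonal, diagonal_mul]
  ring

lemma orthConj_mul_ofPerm_apply (O : orthogonalGroup (Fin d) ℝ) (σ : Equiv.Perm (Fin d))
    (i j : Fin d) : orthConj M (O * ofPerm σ) i j = orthConj M O (σ.symm i) (σ.symm j) := by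
  rw [orthConj_mul, OC_ofPerm, transpose_permMatrix, PEquiv.toMatrix_toPEquiv_mul,
    PEquiv.mul_toMatrix_toPEquiv]
  rfl

lemma trace_orthConj_mul_transpose (O : orthogonalGroup (Fin d) ℝ) :
    (orthConj M O * (orthConj M O)ᵀ).trace = (M * Mᵀ).trace := by
  have h := OC_mul_transpose_self O
  simp only [orthConj, transpose_mul, transpose_transpose, Matrix.mul_assoc]
  rw [← Matrix.mul_assoc (OC O) (OC O)ᵀ, h, Matrix.one_mul, trace_mul_comm]
  simp only [Matrix.mul_assoc, h, Matrix.mul_one]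

@[fun_prop]
lemma continuous_orthConj_apply (i j : Fin d) :
    Continuous fun O : orthogonalGroup (Fin d) ℝ => orthConj M O i j :=
  ((continuous_OC.matrix_transpose.matrix_mul continuous_const).matrix_mul
    continuous_OC).matrix_elem i j

variable {M}

lemma orthConj_transpose (hM : Mᵀ = -M) (O : orthogonalGroup (Fin d) ℝ) :
    (orthConj M O)ᵀ = -orthConj M O := by
  simp [orthConj, transpose_mul, hM, Matrix.mul_assoc]

lemma orthConj_apply_self (hM : Mᵀ = -M) (O : orthogonalGroup (Fin d) ℝ) (i : Fin d) :
    orthConj M O i i = 0 := by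
  have := congr_fun₂ (orthConj_transpose hM O) i i
  rw [transpose_apply, Matrix.neg_apply] at this
  linear_combination this / 2

end OrthConj

section Moments

variable [MeasurableSpace (orthogonalGroup (Fin d) ℝ)] [BorelSpace (orthogonalGroup (Fin d) ℝ)]
  (μ : Measure (orthogonalGroup (Fin d) ℝ)) [μ.IsHaarMeasure] (M : Matrix (Fin d) (Fin d) ℂ)

lemma integral_orthConj_mul_orthConj_eq_zero_of_sign {a b c e : Fin d} (x : Fin d)
    (hx : (Pi.mulSingle x (-1) : Fin d → ℂ) a * (Pi.mulSingle x (-1) : Fin d → ℂ) b *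
      ((Pi.mulSingle x (-1) : Fin d → ℂ) c * (Pi.mulSingle x (-1) : Fin d → ℂ) e) = -1) :
    ∫ O, orthConj M O a b * orthConj M O c e ∂μ = 0 :=
  integral_eq_zero_of_mul_right_eq_neg (g := signFlip x) fun O => by
    simp only [orthConj_mul_signFlip_apply]
    linear_combination (orthConj M O a b * orthConj M O c e) * hx

lemma integral_orthConj_apply_sq_perm (σ : Equiv.Perm (Fin d)) (i j : Fin d) :
    ∫ O, orthConj M O (σ i) (σ j) ^ 2 ∂μ = ∫ O, orthConj M O i j ^ 2 ∂μ := by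
  simpa [orthConj_mul_ofPerm_apply] using
    integral_mul_right_eq_self (μ := μ) (fun O => orthConj M O i j ^ 2) (ofPerm σ.symm)

variable [IsProbabilityMeasure μ] {M}

lemma integral_orthConj_apply_sq (hM : Mᵀ = -M) (hd : 2 ≤ d) {a b : Fin d} (hab : a ≠ b) :
    ∫ O, orthConj M O a b ^ 2 ∂μ = (M * Mᵀ).trace / (d * (d - 1)) := by
  set m := ∫ O, orthConj M O a b ^ 2 ∂μ
  have hentry (i j : Fin d) : ∫ O, orthConj M O i j ^ 2 ∂μ = if i = j then 0 else m := by
    split_ifs with hij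
    · simp [hij, orthConj_apply_self hM]
    · obtain ⟨σ, rfl, rfl⟩ := Equiv.Perm.exists_apply_eq_and_apply_eq hab hij
      exact integral_orthConj_apply_sq_perm μ M σ a b
  have hsum : ∑ i, ∑ j, ∫ O, orthConj M O i j ^ 2 ∂μ = (M * Mᵀ).trace := by
    have hint (i j : Fin d) : Integrable (fun O => orthConj M O i j ^ 2) μ :=
      Continuous.integrable_of_compactSpace (by fun_prop)
    simp_rw [← integral_finsetSum _ fun j _ => hint _ j]
    rw [← integral_finsetSum _ fun i _ => integrable_finsetSum _ fun j _ => hint i j]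
    have hpt (O) : ∑ i, ∑ j, orthConj M O i j ^ 2 = (M * Mᵀ).trace := by
      rw [← trace_orthConj_mul_transpose M O]
      simp [trace, mul_apply, sq]
    simp [hpt]
  have hcount : ∑ i : Fin d, ∑ j : Fin d, ∫ O, orthConj M O i j ^ 2 ∂μ = d * (d - 1) * m := by
    simp [hentry, Finset.sum_ite, Finset.filter_ne, Nat.cast_sub (by omega : 1 ≤ d)]
    ring
  have hd' : (d * (d - 1) : ℂ) ≠ 0 :=
    mul_ne_zero (Nat.cast_ne_zero.mpr (by omega))
      (sub_ne_zero.mpr (by exact_mod_cast (by omega : d ≠ 1)))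
  rw [eq_div_iff hd', ← hsum, hcount]
  ring

lemma integral_orthConj_mul_orthConj (hM : Mᵀ = -M) (hd : 2 ≤ d) (a b c e : Fin d) :
    ∫ O, orthConj M O a b * orthConj M O c e ∂μ =
      (M * Mᵀ).trace / (d * (d - 1)) *
        ((if a = c ∧ b = e then 1 else 0) - (if a = e ∧ b = c then 1 else 0)) := by
  by_cases hab : a = b
  · subst hab
    simp [orthConj_apply_self hM, and_comm]
  by_cases ha : a ≠ c ∧ a ≠ e
  · rw [integral_orthConj_mul_orthConj_eq_zero_of_sign μ M a (by
      simp [Ne.symm hab, Ne.symm ha.1, Ne.symm ha.2])]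
    simp [ha.1, ha.2]
  by_cases hb : b ≠ c ∧ b ≠ e
  · rw [integral_orthConj_mul_orthConj_eq_zero_of_sign μ M b (by
      simp [hab, Ne.symm hb.1, Ne.symm hb.2])]
    simp [hb.1, hb.2]
  rw [not_and_or, not_not, not_not] at ha hb
  obtain ⟨rfl, rfl⟩ | ⟨rfl, rfl⟩ : (a = c ∧ b = e) ∨ (a = e ∧ b = c) := by
    rcases ha with rfl | rfl <;> rcases hb with rfl | rfl <;> simp_all
  · simp [← sq, integral_orthConj_apply_sq μ hM hd hab, hab]
  · have hba (O) : orthConj M O b a = -orthConj M O a b := by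
      rw [← Matrix.neg_apply, ← orthConj_transpose hM, transpose_apply]
    simp [hba, ← sq, integral_neg, integral_orthConj_apply_sq μ hM hd hab, hab]

lemma integral_trace_mul_orthConj_sq (hM : Mᵀ = -M) (hd : 2 ≤ d)
    (X : Matrix (Fin d) (Fin d) ℂ) :
    ∫ O, (X * orthConj M O).trace ^ 2 ∂μ =
      (M * Mᵀ).trace / (d * (d - 1)) * ((X * Xᵀ).trace - (X * X).trace) := by
  calc ∫ O, (X * orthConj M O).trace ^ 2 ∂μ
      = ∫ O, ∑ a, ∑ b, ∑ c, ∑ e, X a b * X c e * (orthConj M O b a * orthConj M O e c) ∂μ := by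
        congr 1; ext O
        simp only [trace, diag, mul_apply, sq, Finset.sum_mul]
        simp only [Finset.mul_sum, mul_mul_mul_comm]
    _ = ∑ a, ∑ b, ∑ c, ∑ e, X a b * X c e * ∫ O, orthConj M O b a * orthConj M O e c ∂μ := by
        simp (disch := intros; exact Continuous.integrable_of_compactSpace (by fun_prop)) only
          [integral_finsetSum, integral_const_mul]
    _ = _ := by
        simp only [integral_orthConj_mul_orthConj μ hM hd]
        generalize (M * Mᵀ).trace / (d * (d - 1)) = κ
        simp only [ite_and, mul_sub, mul_ite, mul_one, mul_zero, Finset.sum_sub_distrib,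
          Finset.sum_ite_irrel, Finset.sum_const_zero, Finset.sum_ite_eq, Finset.mem_univ,
          if_true, trace, diag, mul_apply, transpose_apply, Finset.mul_sum, mul_comm _ κ]

end Moments

end RotatedObservable

theorem stmt_5_general (d : ℕ) (hd : 2 ≤ d)
    [MeasurableSpace (Matrix.orthogonalGroup (Fin d) ℝ)]
    [BorelSpace (Matrix.orthogonalGroup (Fin d) ℝ)]
    (μ : Measure (Matrix.orthogonalGroup (Fin d) ℝ))
    [μ.IsHaarMeasure] [IsProbabilityMeasure μ]
    (ρ Mhat : Matrix (Fin d) (Fin d) ℂ)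
    (hMimag : Mhatᵀ = -Mhat)
    (hM2 : (Mhat * Mhat).trace = (d : ℂ)) :
    ∫ O, (OC O * ρ * (OC O)ᵀ * Mhat).trace ^ 2 ∂μ =
      (2 / ((d : ℂ) - 1)) *
        (((2 : ℂ)⁻¹ • (ρ - ρᵀ)) * ((2 : ℂ)⁻¹ • (ρ - ρᵀ))).trace := by
  have hMM : (Mhat * Mhatᵀ).trace = -d := by rw [hMimag, Matrix.mul_neg, trace_neg, hM2]
  have hd₀ : (d : ℂ) ≠ 0 := Nat.cast_ne_zero.mpr (by omega)
  have hd₁ : (d : ℂ) - 1 ≠ 0 := sub_ne_zero.mpr (by exact_mod_cast (by omega : d ≠ 1))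
  simp_rw [trace_OC_mul_mul_transpose_mul, integral_trace_mul_orthConj_sq μ hMimag hd,
    trace_half_sub_transpose_sq, hMM]
  field_simp
  ring

/-- the second moment of partial real randomized measurements on a single qudit. -/
theorem stmt_5 (d : ℕ) (hd : 2 ≤ d)
    [MeasurableSpace (Matrix.orthogonalGroup (Fin d) ℝ)]
    [BorelSpace (Matrix.orthogonalGroup (Fin d) ℝ)]
    (μ : Measure (Matrix.orthogonalGroup (Fin d) ℝ))
    [μ.IsHaarMeasure] [IsProbabilityMeasure μ]
    (ρ Mhat : Matrix (Fin d) (Fin d) ℂ)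
    (hρ : ρ.IsHermitian)
    (hMhat : Mhat.IsHermitian) (hMimag : Mhatᵀ = -Mhat)
    (hM2 : (Mhat * Mhat).trace = (d : ℂ)) :
    ∫ O, (OC O * ρ * (OC O)ᵀ * Mhat).trace ^ 2 ∂μ =
      (2 / ((d : ℂ) - 1)) *
        (((2 : ℂ)⁻¹ • (ρ - ρᵀ)) * ((2 : ℂ)⁻¹ • (ρ - ρᵀ))).trace :=
  stmt_5_general d hd μ ρ Mhat hMimag hM2
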